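/- arXiv:1904.02045 — 4 statements merged into one kernel-verified Lean document; each statement's English description precedes it below -/
import Mathlib

section
/- Let ζ ∈ ℂ be a primitive 9th root of unity. There do not exist natural numbers a, b, c such that 1 + ζ⁻³ = a/((1-ζ)(1-ζ²)) + b/((1-ζ⁴)(1-ζ⁸)) + c/((1-ζ⁵)(1-ζ⁷)). (This is the inconsistency of the holomorphic Lefschetz fixed point formula that shows the cube of an order 9 non-symplectic automorphism of a K3 surface cannot be symplectic.) -/
/-!
Since `1 + ζ³ + ζ⁶ = 0`, the left-hand side equals `-ζ³`, whereas each of the three fractions,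
written in the `ℚ`-basis `1, ζ, …, ζ⁵` of `ℚ(ζ)`, has no `ζ³`-component. Comparing
`ζ³`-coordinates gives `-1 = 0`.
-/

open Polynomial

namespace IsPrimitiveRoot

variable {K : Type*} [Field K] {ζ : K}

theorem one_sub_pow_ne_zero {n k : ℕ} (hζ : IsPrimitiveRoot ζ n) (hk : k ≠ 0) (hkn : k < n) :
    1 - ζ ^ k ≠ 0 :=
  sub_ne_zero.mpr (hζ.pow_ne_one_of_pos_of_lt hk hkn).symm

theorem eq_zero_of_aeval_eq_zero_of_natDegree_lt [CharZero K] {n : ℕ}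
    (hζ : IsPrimitiveRoot ζ n) (hn : 0 < n) {p : ℚ[X]} (hp : aeval ζ p = 0)
    (hdeg : p.natDegree < n.totient) : p = 0 := by
  by_contra hp0
  have hmin : (minpoly ℚ ζ).natDegree = n.totient := by
    rw [← cyclotomic_eq_minpoly_rat hζ hn, natDegree_cyclotomic]
  have := natDegree_le_of_dvd (minpoly.dvd ℚ ζ hp) hp0
  omega

theorem pow_six_add_pow_three_add_one (hζ : IsPrimitiveRoot ζ 9) : ζ ^ 6 + ζ ^ 3 + 1 = 0 := by
  have h3 : ζ ^ 3 - 1 ≠ 0 :=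
    sub_ne_zero.mpr (hζ.pow_ne_one_of_pos_of_lt (by norm_num) (by norm_num))
  have h : (ζ ^ 3 - 1) * (ζ ^ 6 + ζ ^ 3 + 1) = 0 := by linear_combination hζ.pow_eq_one
  exact (mul_eq_zero.mp h).resolve_left h3

theorem one_add_inv_pow_three (hζ : IsPrimitiveRoot ζ 9) : 1 + (ζ ^ 3)⁻¹ = -ζ ^ 3 := by
  rw [inv_eq_of_mul_eq_one_left (by linear_combination hζ.pow_eq_one : ζ ^ 6 * ζ ^ 3 = 1)]
  linear_combination hζ.pow_six_add_pow_three_add_one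

theorem three_div_one_sub_mul_one_sub_sq (hζ : IsPrimitiveRoot ζ 9) :
    3 / ((1 - ζ) * (1 - ζ ^ 2)) = ζ + 2 * ζ ^ 2 + 2 * ζ ^ 4 + ζ ^ 5 := by
  have h1 : 1 - ζ ≠ 0 := by simpa using hζ.one_sub_pow_ne_zero one_ne_zero (by norm_num)
  rw [div_eq_iff (mul_ne_zero h1 (hζ.one_sub_pow_ne_zero (by norm_num) (by norm_num)))]
  grind [hζ.pow_six_add_pow_three_add_one]

theorem three_div_one_sub_pow_four_mul_one_sub_pow_eight (hζ : IsPrimitiveRoot ζ 9) :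
    3 / ((1 - ζ ^ 4) * (1 - ζ ^ 8)) = -2 * ζ - ζ ^ 2 - ζ ^ 4 - 2 * ζ ^ 5 := by
  rw [div_eq_iff (mul_ne_zero (hζ.one_sub_pow_ne_zero (by norm_num) (by norm_num))
    (hζ.one_sub_pow_ne_zero (by norm_num) (by norm_num)))]
  grind [hζ.pow_six_add_pow_three_add_one]

theorem three_div_one_sub_pow_five_mul_one_sub_pow_seven (hζ : IsPrimitiveRoot ζ 9) :
    3 / ((1 - ζ ^ 5) * (1 - ζ ^ 7)) = ζ - ζ ^ 2 - ζ ^ 4 + ζ ^ 5 := by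
  rw [div_eq_iff (mul_ne_zero (hζ.one_sub_pow_ne_zero (by norm_num) (by norm_num))
    (hζ.one_sub_pow_ne_zero (by norm_num) (by norm_num)))]
  grind [hζ.pow_six_add_pow_three_add_one]

theorem one_add_inv_pow_three_ne_lefschetz_sum [CharZero K] (hζ : IsPrimitiveRoot ζ 9)
    (a b c : ℚ) :
    1 + (ζ ^ 3)⁻¹ ≠
      a / ((1 - ζ) * (1 - ζ ^ 2)) + b / ((1 - ζ ^ 4) * (1 - ζ ^ 8)) +
        c / ((1 - ζ ^ 5) * (1 - ζ ^ 7)) := by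
  intro h
  set Q : ℚ[X] := 3 * X ^ 3 + C a * (X + 2 * X ^ 2 + 2 * X ^ 4 + X ^ 5) +
    C b * (-2 * X - X ^ 2 - X ^ 4 - 2 * X ^ 5) + C c * (X - X ^ 2 - X ^ 4 + X ^ 5)
  have hQ : aeval ζ Q = 0 := by
    simp only [Q, map_add, map_sub, map_neg, map_mul, map_pow, map_ofNat, aeval_C, aeval_X,
      eq_ratCast]
    rw [hζ.one_add_inv_pow_three] at h
    linear_combination -3 * h - a * hζ.three_div_one_sub_mul_one_sub_sq -
      b * hζ.three_div_one_sub_pow_four_mul_one_sub_pow_eight -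
      c * hζ.three_div_one_sub_pow_five_mul_one_sub_pow_seven
  have hQ0 : Q = 0 := hζ.eq_zero_of_aeval_eq_zero_of_natDegree_lt (by norm_num) hQ <| by
    rw [show Nat.totient 9 = 6 by decide]
    have : Q.natDegree ≤ 5 := by simp only [Q]; compute_degree
    omega
  have hQ3 : Q.coeff 3 = 3 := by simp [Q, coeff_X, coeff_X_pow]
  simp [hQ0] at hQ3

end IsPrimitiveRoot

/-- The holomorphic Lefschetz fixed point formula for an order 9 automorphism `σ` of a K3
surface with `σ*(ω_X) = ζ³ ω_X` is inconsistent: there do not exist natural numbers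
`a, b, c` (counting isolated fixed points of types `A_{1,2}`, `A_{4,8}`, `A_{5,7}`) with
`1 + ζ⁻³ = a/((1-ζ)(1-ζ²)) + b/((1-ζ⁴)(1-ζ⁸)) + c/((1-ζ⁵)(1-ζ⁷))`. -/
theorem order_nine_cube_not_symplectic_lefschetz (ζ : ℂ) (hζ : IsPrimitiveRoot ζ 9) :
    ¬ ∃ a b c : ℕ,
      1 + (ζ ^ 3)⁻¹ =
        (a : ℂ) / ((1 - ζ) * (1 - ζ ^ 2)) +
        (b : ℂ) / ((1 - ζ ^ 4) * (1 - ζ ^ 8)) +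
        (c : ℂ) / ((1 - ζ ^ 5) * (1 - ζ ^ 7)) := by
  rintro ⟨a, b, c, h⟩
  exact hζ.one_add_inv_pow_three_ne_lefschetz_sum a b c (by exact_mod_cast h)
end

section
/- Let ζ ∈ ℂ be a primitive 9th root of unity, let a₂₈, a₃₇, a₄₆, a₅₅ be natural numbers and let α be an integer. If 1 + ζ⁸ = a₂₈/((1-ζ²)(1-ζ⁸)) + a₃₇/((1-ζ³)(1-ζ⁷)) + a₄₆/((1-ζ⁴)(1-ζ⁶)) + a₅₅/((1-ζ⁵)(1-ζ⁵)) + α·(1+ζ)/(1-ζ)², then a₂₈ + a₅₅ = 3α + 1, a₃₇ = 2α + 1, a₄₆ + 3a₂₈ = 8α + 4, and in particular α ≥ 0. -/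
/-!
Multiplied by 3, each term of the Lefschetz sum has an explicit expansion in the `ℚ`-basis
`1, ζ, …, ζ⁵` of `ℚ(ζ)`, the inverses being computed modulo `Φ₉ = X⁶ + X³ + 1`. Comparing the
coefficients of `1`, `ζ³` and `ζ⁴` gives three integral linear relations equivalent to the
claimed ones, and `α ≥ 0` follows from `a₃₇ = 2α + 1 ≥ 0`.
-/

open Polynomial

namespace IsPrimitiveRoot

variable {K : Type*} [Field K] {ζ : K}

theorem linearIndependent_pow_totient [CharZero K] {n : ℕ} (hζ : IsPrimitiveRoot ζ n) (hn : 0 < n) :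
    LinearIndependent ℚ fun i : Fin n.totient => ζ ^ (i : ℕ) := by
  have := linearIndependent_pow (K := ℚ) ζ
  rwa [← cyclotomic_eq_minpoly_rat hζ hn, natDegree_cyclotomic] at this

theorem eq_zero_of_sum_intCast_mul_pow_eq_zero [CharZero K] (hζ : IsPrimitiveRoot ζ 9)
    {c : Fin 6 → ℤ} (h : ∑ i, (c i : K) * ζ ^ (i : ℕ) = 0) : c = 0 := by
  have hli := hζ.linearIndependent_pow_totient (by norm_num)
  rw [show Nat.totient 9 = 6 by decide] at hli
  funext i
  exact_mod_cast Fintype.linearIndependent_iff.1 hli (fun i => (c i : ℚ))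
    (by simpa [Rat.smul_def] using h) i

theorem three_mul_lefschetz_sum (hζ : IsPrimitiveRoot ζ 9) (a b c d e : K) :
    3 * (a / ((1 - ζ ^ 2) * (1 - ζ ^ 8)) + b / ((1 - ζ ^ 3) * (1 - ζ ^ 7)) +
        c / ((1 - ζ ^ 4) * (1 - ζ ^ 6)) + d / ((1 - ζ ^ 5) * (1 - ζ ^ 5)) +
        e * (1 + ζ) / (1 - ζ) ^ 2) =
      a * (1 - ζ ^ 2 - ζ ^ 3 - 2 * ζ ^ 5) + b * (1 - ζ ^ 2 + ζ ^ 3 - ζ ^ 4) +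
        c * (1 - ζ ^ 2 + ζ ^ 4 - ζ ^ 5) + d * (-2 + 2 * ζ ^ 2 - ζ ^ 3 - 3 * ζ ^ 4 + ζ ^ 5) +
        e * (-4 + 4 * ζ ^ 2 + ζ ^ 3 + 3 * ζ ^ 4 + 5 * ζ ^ 5) := by
  have h6 := hζ.pow_six_add_pow_three_add_one
  have hne (k : ℕ) (hk : k ≠ 0) (hk9 : k < 9) : 1 - ζ ^ k ≠ 0 := hζ.one_sub_pow_ne_zero hk hk9
  -- the `linear_combination` coefficients are quotients by `Φ₉`, found by polynomial division
  have ha : 3 * (a / ((1 - ζ ^ 2) * (1 - ζ ^ 8))) = a * (1 - ζ ^ 2 - ζ ^ 3 - 2 * ζ ^ 5) := by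
    rw [mul_div_assoc', div_eq_iff (mul_ne_zero (hne 2 (by norm_num) (by norm_num))
      (hne 8 (by norm_num) (by norm_num)))]
    linear_combination a * (2 + 2 * ζ ^ 2 - ζ ^ 3 - ζ ^ 4 - ζ ^ 5 - ζ ^ 6 - ζ ^ 7 + 2 * ζ ^ 9) * h6
  have hb : 3 * (b / ((1 - ζ ^ 3) * (1 - ζ ^ 7))) = b * (1 - ζ ^ 2 + ζ ^ 3 - ζ ^ 4) := by
    rw [mul_div_assoc', div_eq_iff (mul_ne_zero (hne 3 (by norm_num) (by norm_num))
      (hne 7 (by norm_num) (by norm_num)))]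
    linear_combination b * (2 + ζ ^ 2 - 2 * ζ ^ 3 + ζ ^ 4 - 2 * ζ ^ 5 + ζ ^ 6 - ζ ^ 7 + ζ ^ 8) * h6
  have hc : 3 * (c / ((1 - ζ ^ 4) * (1 - ζ ^ 6))) = c * (1 - ζ ^ 2 + ζ ^ 4 - ζ ^ 5) := by
    rw [mul_div_assoc', div_eq_iff (mul_ne_zero (hne 4 (by norm_num) (by norm_num))
      (hne 6 (by norm_num) (by norm_num)))]
    linear_combination c * (2 + ζ ^ 2 - 2 * ζ ^ 3 - ζ ^ 8 + ζ ^ 9) * h6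
  have hd : 3 * (d / ((1 - ζ ^ 5) * (1 - ζ ^ 5))) =
      d * (-2 + 2 * ζ ^ 2 - ζ ^ 3 - 3 * ζ ^ 4 + ζ ^ 5) := by
    have h5 := hne 5 (by norm_num) (by norm_num)
    rw [mul_div_assoc', div_eq_iff (mul_ne_zero h5 h5)]
    linear_combination d * (5 - 2 * ζ ^ 2 - 4 * ζ ^ 3 + 3 * ζ ^ 4 - 3 * ζ ^ 5 - ζ ^ 6 + ζ ^ 7
      + 3 * ζ ^ 8 - ζ ^ 9) * h6
  have he : 3 * (e * (1 + ζ) / (1 - ζ) ^ 2) =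
      e * (-4 + 4 * ζ ^ 2 + ζ ^ 3 + 3 * ζ ^ 4 + 5 * ζ ^ 5) := by
    rw [mul_div_assoc', div_eq_iff (pow_ne_zero 2 (by simpa using hne 1 one_ne_zero (by norm_num)))]
    linear_combination e * (7 - 5 * ζ) * h6
  rw [mul_add, mul_add, mul_add, mul_add, ha, hb, hc, hd, he]

end IsPrimitiveRoot

/-- Lemma 2.3 of the paper: if `ζ` is a primitive 9th root of unity and the holomorphic
Lefschetz formula
`1 + ζ⁸ = a₂₈/((1-ζ²)(1-ζ⁸)) + a₃₇/((1-ζ³)(1-ζ⁷)) + a₄₆/((1-ζ⁴)(1-ζ⁶)) + a₅₅/((1-ζ⁵)(1-ζ⁵))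
  + α(1+ζ)/(1-ζ)²`
holds, then `a₂₈ + a₅₅ = 3α + 1`, `a₃₇ = 2α + 1`, `a₄₆ + 3a₂₈ = 8α + 4` and `α ≥ 0`. -/
theorem lefschetz_relations_order_nine (ζ : ℂ) (hζ : IsPrimitiveRoot ζ 9)
    (a28 a37 a46 a55 : ℕ) (α : ℤ)
    (h : 1 + ζ ^ 8 =
      (a28 : ℂ) / ((1 - ζ ^ 2) * (1 - ζ ^ 8)) +
      (a37 : ℂ) / ((1 - ζ ^ 3) * (1 - ζ ^ 7)) +
      (a46 : ℂ) / ((1 - ζ ^ 4) * (1 - ζ ^ 6)) +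
      (a55 : ℂ) / ((1 - ζ ^ 5) * (1 - ζ ^ 5)) +
      (α : ℂ) * (1 + ζ) / (1 - ζ) ^ 2) :
    (a28 : ℤ) + (a55 : ℤ) = 3 * α + 1 ∧
    (a37 : ℤ) = 2 * α + 1 ∧
    (a46 : ℤ) + 3 * (a28 : ℤ) = 8 * α + 4 ∧
    0 ≤ α := by
  have h3 := congrArg (3 * ·) h
  simp only [hζ.three_mul_lefschetz_sum] at h3
  have hcoeff := hζ.eq_zero_of_sum_intCast_mul_pow_eq_zero
    (c := ![(a28 : ℤ) + a37 + a46 - 2 * a55 - 4 * α - 3, 0,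
      -a28 - a37 - a46 + 2 * a55 + 4 * α + 3, -a28 + a37 - a55 + α,
      -a37 + a46 - 3 * a55 + 3 * α, -2 * a28 - a46 + a55 + 5 * α + 3]) <| by
    simp only [Fin.sum_univ_six, Matrix.cons_val, Fin.coe_ofNat_eq_mod, Nat.reduceMod]
    push_cast
    linear_combination -h3 + 3 * ζ ^ 2 * hζ.pow_six_add_pow_three_add_one
  have E0 := congrFun hcoeff 0
  have E3 := congrFun hcoeff 3
  have E4 := congrFun hcoeff 4
  simp only [Matrix.cons_val, Pi.zero_apply] at E0 E3 E4
  omega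
end

section
/- Let ζ ∈ ℂ be a primitive 9th root of unity and let F ∈ ℂ[x₀, x₁, x₂, x₃] be a homogeneous polynomial of degree 4 satisfying F(x₀, x₁, ζ⁶x₂, ζ⁴x₃) = F(x₀, x₁, x₂, x₃). Then every monomial x₀^{d₀}x₁^{d₁}x₂^{d₂}x₃^{d₃} occurring in F has (d₂, d₃) ∈ {(0,0), (3,0), (1,3)}; equivalently, F = F₄(x₀, x₁) + F₁(x₀, x₁)·x₂³ + λ·x₂x₃³ for some homogeneous polynomials F₄, F₁ of degrees 4 and 1 in x₀, x₁ and some λ ∈ ℂ. -/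
open MvPolynomial in
lemma coeff_aeval_scale (c2 c3 : ℂ) (F : MvPolynomial (Fin 4) ℂ) (d : Fin 4 →₀ ℕ) :
    coeff d (aeval ![X 0, X 1, c2 • X 2, c3 • X 3] F)
      = c2 ^ d 2 * c3 ^ d 3 * coeff d F := by
  have key : ∀ (e : Fin 4 →₀ ℕ) (a : ℂ),
      aeval ![X 0, X 1, c2 • X 2, c3 • X 3] (monomial e a)
        = monomial e (c2 ^ e 2 * c3 ^ e 3 * a) := by
    intro e a
    rw [aeval_monomial, Finsupp.prod_fintype _ _ (fun i => pow_zero _),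
      Fin.prod_univ_four]
    rw [monomial_eq, Finsupp.prod_fintype _ _ (fun i => pow_zero _),
      Fin.prod_univ_four]
    simp only [Matrix.cons_val_zero, Matrix.cons_val_one, Matrix.head_cons,
      Matrix.cons_val_two, Matrix.tail_cons, Matrix.cons_val_three, smul_pow,
      algebraMap_eq]
    rw [smul_eq_C_mul, smul_eq_C_mul, map_mul, map_mul]
    ring
  conv_lhs => rw [F.as_sum, map_sum]
  rw [coeff_sum]
  simp only [key, coeff_monomial]
  rw [Finset.sum_ite_eq' F.support d]
  by_cases hd : d ∈ F.support
  · simp [hd]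
  · simp [hd, MvPolynomial.notMem_support_iff.mp hd]

open MvPolynomial in
/-- If `ζ` is a primitive 9th root of unity and `F` is a homogeneous quartic in
`x₀, x₁, x₂, x₃` invariant under `(x₀, x₁, x₂, x₃) ↦ (x₀, x₁, ζ⁶x₂, ζ⁴x₃)`, then every
monomial of `F` has `(x₂, x₃)`-exponents in `{(0,0), (3,0), (1,3)}`, i.e.
`F = F₄(x₀,x₁) + F₁(x₀,x₁)x₂³ + λx₂x₃³`. -/
theorem invariant_quartics_case_A1 (ζ : ℂ) (hζ : IsPrimitiveRoot ζ 9)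
    (F : MvPolynomial (Fin 4) ℂ) (hF : F.IsHomogeneous 4)
    (hinv : aeval ![X 0, X 1, ζ ^ 6 • X 2, ζ ^ 4 • X 3] F = F) :
    ∀ d ∈ F.support, (d 2, d 3) ∈ ({(0, 0), (3, 0), (1, 3)} : Set (ℕ × ℕ)) := by
  intro d hd
  have hc : coeff d F ≠ 0 := mem_support_iff.mp hd
  have h1 : (ζ ^ 6) ^ d 2 * (ζ ^ 4) ^ d 3 * coeff d F = coeff d F := by
    conv_rhs => rw [← hinv]
    rw [coeff_aeval_scale]
  have h2 : (ζ ^ 6) ^ d 2 * (ζ ^ 4) ^ d 3 = 1 :=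
    mul_right_cancel₀ hc (h1.trans (one_mul (coeff d F)).symm)
  have h3 : ζ ^ (6 * d 2 + 4 * d 3) = 1 := by
    rw [pow_add, pow_mul, pow_mul]; exact h2
  have hdvd : 9 ∣ 6 * d 2 + 4 * d 3 := hζ.dvd_of_pow_eq_one _ h3
  have hdeg : d 0 + d 1 + d 2 + d 3 = 4 := by
    have h := hF hc
    rw [Finsupp.weight_apply, Finsupp.sum_fintype _ _ (fun i => by simp),
      Fin.sum_univ_four] at h
    simpa using h
  have h4 : d 2 + d 3 ≤ 4 := by omega
  simp only [Set.mem_insert_iff, Set.mem_singleton_iff, Prod.mk.injEq]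
  omega
end

section
/- Let ζ ∈ ℂ be a primitive 9th root of unity and let F ∈ ℂ[x₀, x₁, x₂, x₃] be a homogeneous polynomial of degree 4 satisfying F(x₀, ζ³x₁, ζ⁶x₂, ζx₃) = F(x₀, x₁, x₂, x₃). Then F is a ℂ-linear combination of the six monomials x₀⁴, x₀²x₁x₂, x₁²x₂², x₀x₂³, x₀x₁³ and x₂x₃³. -/
open MvPolynomial in
lemma aeval_diag_monomial (c : Fin 4 → ℂ) (v : Fin 4 →₀ ℕ) (a : ℂ) :
    aeval (fun i => c i • X i) (monomial v a) = monomial v (a * ∏ i, c i ^ v i) := by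
  rw [aeval_monomial]
  simp_rw [smul_pow, Algebra.smul_def, Finsupp.prod]
  rw [Finset.prod_mul_distrib, ← map_prod]
  rw [← Finsupp.prod, ← Finsupp.prod, Finsupp.prod_fintype _ _ (fun i => pow_zero (c i))]
  rw [algebraMap_eq, ← mul_assoc, mul_comm (C a), mul_assoc, ← monomial_eq, C_mul_monomial,
    mul_comm]

open MvPolynomial in
lemma coeff_aeval_diag (c : Fin 4 → ℂ) (F : MvPolynomial (Fin 4) ℂ) (d : Fin 4 →₀ ℕ) :
    coeff d (aeval (fun i => c i • X i) F) = (∏ i, c i ^ d i) * coeff d F := by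
  conv_lhs => rw [F.as_sum, map_sum]
  simp_rw [aeval_diag_monomial]
  rw [coeff_sum]
  simp_rw [coeff_monomial]
  rw [Finset.sum_ite_eq' F.support d]
  by_cases hd : d ∈ F.support
  · rw [if_pos hd, mul_comm]
  · rw [if_neg hd, notMem_support_iff.mp hd, mul_zero]

set_option maxHeartbeats 1000000 in
open MvPolynomial in
/-- If `ζ` is a primitive 9th root of unity and `F` is a homogeneous quartic in
`x₀, x₁, x₂, x₃` invariant under `(x₀, x₁, x₂, x₃) ↦ (x₀, ζ³x₁, ζ⁶x₂, ζx₃)`, then `F` is a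
linear combination of the six monomials `x₀⁴, x₀²x₁x₂, x₁²x₂², x₀x₂³, x₀x₁³, x₂x₃³`, i.e.
every monomial of `F` has exponent vector among the corresponding six. -/
theorem invariant_quartics_case_A2 (ζ : ℂ) (hζ : IsPrimitiveRoot ζ 9)
    (F : MvPolynomial (Fin 4) ℂ) (hF : F.IsHomogeneous 4)
    (hinv : aeval ![X 0, ζ ^ 3 • X 1, ζ ^ 6 • X 2, ζ • X 3] F = F) :
    ∀ d ∈ F.support, (d 0, d 1, d 2, d 3) ∈
      ({(4, 0, 0, 0), (2, 1, 1, 0), (0, 2, 2, 0), (1, 0, 3, 0), (1, 3, 0, 0), (0, 0, 1, 3)} :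
        Set (ℕ × ℕ × ℕ × ℕ)) := by
  intro d hd
  have hcoeff := mem_support_iff.mp hd
  -- sum of degrees is 4
  have hsum : d 0 + d 1 + d 2 + d 3 = 4 := by
    have h := hF hcoeff
    rw [Finsupp.weight_apply, Finsupp.sum_fintype _ _ (fun _ => by simp)] at h
    simpa [Fin.sum_univ_four] using h
  -- rewrite the evaluation vector as a diagonal substitution
  have hvec : ![X 0, ζ ^ 3 • X 1, ζ ^ 6 • X 2, ζ • X 3] =
      fun i => (![1, ζ ^ 3, ζ ^ 6, ζ] : Fin 4 → ℂ) i • (X i : MvPolynomial (Fin 4) ℂ) := by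
    funext i
    fin_cases i <;> simp [one_smul]
  rw [hvec] at hinv
  have h1 : coeff d F = (∏ i, (![1, ζ ^ 3, ζ ^ 6, ζ] : Fin 4 → ℂ) i ^ d i) * coeff d F := by
    conv_lhs => rw [← hinv, coeff_aeval_diag]
  have h2 : (∏ i, (![1, ζ ^ 3, ζ ^ 6, ζ] : Fin 4 → ℂ) i ^ d i) = 1 :=
    mul_right_cancel₀ hcoeff (h1.symm.trans (one_mul _).symm)
  have h3 : ζ ^ (3 * d 1 + 6 * d 2 + d 3) = 1 := by
    rw [Fin.prod_univ_four] at h2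
    simpa [pow_add, pow_mul, mul_assoc] using h2
  have h4 : 9 ∣ 3 * d 1 + 6 * d 2 + d 3 := (hζ.pow_eq_one_iff_dvd _).mp h3
  simp only [Set.mem_insert_iff, Set.mem_singleton_iff, Prod.mk.injEq]
  obtain ⟨k, hk⟩ := h4
  have hk4 : k ≤ 4 := by omega
  interval_cases k <;> omega
end
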